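/- arXiv:1903.01073 — 2 statements merged into one kernel-verified Lean document; each statement's English description precedes it below -/
import Mathlib

section
/- Clumped one-dimensional optimal embedding below the threshold (Proposition 4): let w ∈ ℝ^N with w_i ≥ 0 for all i, let λ := λ2(L(w)), and assume the eigenspace of L(w) for the eigenvalue λ is one-dimensional and spanned by the vector z = (e; −e) ∈ ℝ^n (i.e., λ2 is simple with Fiedler vector z). Let U be an n×n real matrix and X := UᵀU with ⟨X, e_n e_nᵀ⟩ = 0 and ⟨X, L(w) − λ·I⟩ = 0. Then there exists a vector h ∈ ℝ^n such that the i-th column u_i of U satisfies u_i = h for every 1 ≤ i ≤ N and u_i = −h for every N+1 ≤ i ≤ n; i.e., in the optimal realization the nodes of each layer clump together at two opposite points. -/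
open Matrix

/-- Eigenvalues of a real symmetric matrix, listed in nondecreasing order with multiplicity
(junk value `0` if the matrix is not Hermitian). -/
noncomputable def sortedEigs {m : ℕ} (A : Matrix (Fin m) (Fin m) ℝ) : Fin m → ℝ :=
  if hA : A.IsHermitian then fun k => hA.eigenvalues (Tuple.sort hA.eigenvalues k) else 0

/-- The supra-Laplacian `L(w) = [[L1 + W, -W], [-W, L2 + W]]` of a two-layer multiplex,
as a matrix indexed by `Fin (N + N)`. -/
noncomputable def supraLap {N : ℕ} (L1 L2 : Matrix (Fin N) (Fin N) ℝ) (w : Fin N → ℝ) :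
    Matrix (Fin (N + N)) (Fin (N + N)) ℝ :=
  Matrix.reindex finSumFinEquiv finSumFinEquiv
    (Matrix.fromBlocks (L1 + Matrix.diagonal w) (-(Matrix.diagonal w))
      (-(Matrix.diagonal w)) (L2 + Matrix.diagonal w))

/-- The interlayer edge matrix `L_{i,i+N} = (δ_i - δ_{i+N})(δ_i - δ_{i+N})ᵀ`. -/
noncomputable def interE {N : ℕ} (i : Fin N) : Matrix (Fin (N + N)) (Fin (N + N)) ℝ :=
  Matrix.vecMulVec
    (Pi.single (Fin.castAdd N i) 1 - Pi.single (Fin.natAdd N i) 1)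
    (Pi.single (Fin.castAdd N i) 1 - Pi.single (Fin.natAdd N i) 1)

/-- The matrix inner product `⟨A, B⟩ = trace(AᵀB)`. -/
noncomputable def mip {m : ℕ} (A B : Matrix (Fin m) (Fin m) ℝ) : ℝ := (Aᵀ * B).trace

/-- The block-diagonal Laplacian `L0 = diag(L1, L2)` of the disjoint union of the layers. -/
noncomputable def L0big {N : ℕ} (L1 L2 : Matrix (Fin N) (Fin N) ℝ) :
    Matrix (Fin (N + N)) (Fin (N + N)) ℝ :=
  Matrix.reindex finSumFinEquiv finSumFinEquiv (Matrix.fromBlocks L1 0 0 L2)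

/-- The vector `z = (e; -e) ∈ ℝ^n`. -/
noncomputable def zvec (N : ℕ) : Fin (N + N) → ℝ :=
  fun k => if (k : ℕ) < N then 1 else -1

/-!
Each row `u` of `U` is orthogonal to `e` (this is `⟨X, e eᵀ⟩ = 0`), and `⟨X, L(w) - λI⟩` is the sum
of the quadratic forms `uᵀ (L(w) - λI) u` over the rows. As `L(w)` is positive semidefinite with
`L(w) e = 0`, `e` is a bottom eigenvector, so expanding in an orthonormal eigenbasis gives
`uᵀ L(w) u ≥ λ₂ |u|²` for `u ⊥ e`, with equality only for `λ₂`-eigenvectors. Hence all the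
quadratic forms vanish, every row is an eigenvector for `λ₂`, i.e. a multiple `t_k z` of the
Fiedler vector, and `h = t` does it.
-/

lemma Matrix.dotProduct_vecMulVec_self_mulVec {n : Type*} [Fintype n] (a x : n → ℝ) :
    x ⬝ᵥ (vecMulVec a a *ᵥ x) = (a ⬝ᵥ x) ^ 2 := by
  rw [vecMulVec_mulVec, op_smul_eq_smul, dotProduct_smul, dotProduct_comm x a, smul_eq_mul, sq]

namespace Matrix

variable {n : Type*} [Fintype n] [DecidableEq n]

lemma mulVec_dotProduct_mulVec_of_mem_unitaryGroup {V : Matrix n n ℝ}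
    (hV : V ∈ unitaryGroup n ℝ) (u v : n → ℝ) : (V *ᵥ u) ⬝ᵥ (V *ᵥ v) = u ⬝ᵥ v := by
  rw [dotProduct_mulVec, ← vecMul_transpose, vecMul_vecMul, ← conjTranspose_eq_transpose_of_trivial,
    ← star_eq_conjTranspose, mem_unitaryGroup_iff'.mp hV, vecMul_one]

namespace IsHermitian

variable {A : Matrix n n ℝ} (hA : A.IsHermitian)

noncomputable def eigenCoords (x : n → ℝ) : n → ℝ :=
  star (hA.eigenvectorUnitary : Matrix n n ℝ) *ᵥ x

lemma eigenCoords_injective : Function.Injective hA.eigenCoords := by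
  intro x y hxy
  have := congrArg ((hA.eigenvectorUnitary : Matrix n n ℝ) *ᵥ ·) hxy
  simpa only [eigenCoords, mulVec_mulVec, mem_unitaryGroup_iff.mp hA.eigenvectorUnitary.2,
    one_mulVec] using this

lemma eigenCoords_zero : hA.eigenCoords 0 = 0 :=
  mulVec_zero _

lemma eigenCoords_smul (c : ℝ) (x : n → ℝ) : hA.eigenCoords (c • x) = c • hA.eigenCoords x :=
  mulVec_smul _ c x

lemma eigenCoords_dotProduct (x y : n → ℝ) :
    hA.eigenCoords x ⬝ᵥ hA.eigenCoords y = x ⬝ᵥ y :=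
  mulVec_dotProduct_mulVec_of_mem_unitaryGroup (star hA.eigenvectorUnitary).2 x y

lemma eigenCoords_mulVec (x : n → ℝ) :
    hA.eigenCoords (A *ᵥ x) = hA.eigenvalues * hA.eigenCoords x := by
  set V : Matrix n n ℝ := (hA.eigenvectorUnitary : Matrix n n ℝ)
  have hdiag : star V * A * V = diagonal hA.eigenvalues := by
    simpa [V] using hA.conjStarAlgAut_star_eigenvectorUnitary
  have hVA : star V * A = diagonal hA.eigenvalues * star V := by
    rw [← hdiag, mul_assoc _ V, mem_unitaryGroup_iff.mp hA.eigenvectorUnitary.2, mul_one]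
  ext k
  rw [eigenCoords, eigenCoords, mulVec_mulVec, hVA, ← mulVec_mulVec, mulVec_diagonal, Pi.mul_apply]

lemma mulVec_eq_smul_iff (c : ℝ) (x : n → ℝ) :
    A *ᵥ x = c • x ↔ ∀ k, (hA.eigenvalues k - c) * hA.eigenCoords x k = 0 := by
  rw [← hA.eigenCoords_injective.eq_iff, eigenCoords_mulVec, eigenCoords_smul, funext_iff]
  simp only [Pi.mul_apply, Pi.smul_apply, smul_eq_mul, sub_mul, sub_eq_zero]

lemma dotProduct_sub_smul_mulVec_eq_sum (c : ℝ) (x : n → ℝ) :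
    x ⬝ᵥ ((A - c • 1) *ᵥ x) = ∑ k, (hA.eigenvalues k - c) * hA.eigenCoords x k ^ 2 := by
  rw [sub_mulVec, smul_mulVec, one_mulVec, dotProduct_sub, dotProduct_smul,
    ← hA.eigenCoords_dotProduct x, ← hA.eigenCoords_dotProduct x, eigenCoords_mulVec, smul_eq_mul,
    dotProduct, dotProduct, Finset.mul_sum, ← Finset.sum_sub_distrib]
  refine Finset.sum_congr rfl fun k _ => ?_
  rw [Pi.mul_apply]
  ring

end IsHermitian

section SortedEigs

variable {m : ℕ} {A : Matrix (Fin m) (Fin m) ℝ}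

lemma IsHermitian.sortedEigs_monotone (hA : A.IsHermitian) : Monotone (sortedEigs A) := by
  rw [sortedEigs, dif_pos hA]
  exact Tuple.monotone_sort hA.eigenvalues

lemma IsHermitian.eigenvalues_eq_sortedEigs (hA : A.IsHermitian) (j : Fin m) :
    hA.eigenvalues j = sortedEigs A ((Tuple.sort hA.eigenvalues).symm j) := by
  rw [sortedEigs, dif_pos hA, Equiv.apply_symm_apply]

theorem IsHermitian.eigenvalues_sub_sortedEigs_one_mul_sq_nonneg (hA : A.IsHermitian)
    (hm : 1 < m) {v₀ x : Fin m → ℝ} (hv₀ : v₀ ≠ 0)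
    (hAv₀ : A *ᵥ v₀ = sortedEigs A ⟨0, by omega⟩ • v₀) (hx : v₀ ⬝ᵥ x = 0) (k : Fin m) :
    0 ≤ (hA.eigenvalues k - sortedEigs A ⟨1, hm⟩) * hA.eigenCoords x k ^ 2 := by
  have hle : ∀ j, (Tuple.sort hA.eigenvalues).symm j ≠ ⟨0, by omega⟩ →
      sortedEigs A ⟨1, hm⟩ ≤ hA.eigenvalues j := fun j hj => by
    rw [hA.eigenvalues_eq_sortedEigs j]
    exact hA.sortedEigs_monotone (Fin.le_def.2 (Nat.one_le_iff_ne_zero.2 (Fin.val_ne_of_ne hj)))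
  rcases eq_or_ne ((Tuple.sort hA.eigenvalues).symm k) ⟨0, by omega⟩ with hk | hk
  swap
  · exact mul_nonneg (sub_nonneg.2 (hle k hk)) (sq_nonneg _)
  have hμk : hA.eigenvalues k = sortedEigs A ⟨0, by omega⟩ := by
    rw [hA.eigenvalues_eq_sortedEigs, hk]
  rcases eq_or_ne (hA.eigenvalues k) (sortedEigs A ⟨1, hm⟩) with heq | hne
  · rw [heq, sub_self, zero_mul]
  -- `λ₁ < λ₂`, so `k` is the only eigen-direction at `λ₁` and `v₀` points along it alone
  have hy₀ : ∀ j, j ≠ k → hA.eigenCoords v₀ j = 0 := by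
    intro j hj
    have hlt : hA.eigenvalues k < hA.eigenvalues j :=
      (lt_of_le_of_ne (hμk ▸ hA.sortedEigs_monotone (Fin.le_def.2 zero_le_one)) hne).trans_le
        (hle j fun h => hj ((Tuple.sort hA.eigenvalues).symm.injective (h.trans hk.symm)))
    have := (hA.mulVec_eq_smul_iff _ v₀).1 hAv₀ j
    rwa [← hμk, mul_eq_zero, or_iff_right (sub_ne_zero.2 hlt.ne')] at this
  have hy₀k : hA.eigenCoords v₀ k ≠ 0 := by
    refine fun h => hv₀ (hA.eigenCoords_injective ?_)
    ext j
    rw [hA.eigenCoords_zero, Pi.zero_apply]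
    rcases eq_or_ne j k with rfl | hj
    exacts [h, hy₀ j hj]
  have hyk : hA.eigenCoords v₀ k * hA.eigenCoords x k = 0 := by
    rw [← hx, ← hA.eigenCoords_dotProduct, dotProduct,
      Finset.sum_eq_single k (fun j _ hj => by rw [hy₀ j hj, zero_mul]) (by simp)]
  rw [(mul_eq_zero.1 hyk).resolve_left hy₀k]
  simp

theorem IsHermitian.dotProduct_sub_sortedEigs_one_smul_mulVec_nonneg (hA : A.IsHermitian)
    (hm : 1 < m) {v₀ x : Fin m → ℝ} (hv₀ : v₀ ≠ 0)
    (hAv₀ : A *ᵥ v₀ = sortedEigs A ⟨0, by omega⟩ • v₀) (hx : v₀ ⬝ᵥ x = 0) :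
    0 ≤ x ⬝ᵥ ((A - sortedEigs A ⟨1, hm⟩ • 1) *ᵥ x) := by
  rw [hA.dotProduct_sub_smul_mulVec_eq_sum]
  exact Finset.sum_nonneg fun k _ =>
    hA.eigenvalues_sub_sortedEigs_one_mul_sq_nonneg hm hv₀ hAv₀ hx k

theorem IsHermitian.mulVec_eq_sortedEigs_one_smul (hA : A.IsHermitian)
    (hm : 1 < m) {v₀ x : Fin m → ℝ} (hv₀ : v₀ ≠ 0)
    (hAv₀ : A *ᵥ v₀ = sortedEigs A ⟨0, by omega⟩ • v₀) (hx : v₀ ⬝ᵥ x = 0)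
    (h : x ⬝ᵥ ((A - sortedEigs A ⟨1, hm⟩ • 1) *ᵥ x) = 0) :
    A *ᵥ x = sortedEigs A ⟨1, hm⟩ • x := by
  rw [hA.dotProduct_sub_smul_mulVec_eq_sum, Finset.sum_eq_zero_iff_of_nonneg fun k _ =>
    hA.eigenvalues_sub_sortedEigs_one_mul_sq_nonneg hm hv₀ hAv₀ hx k] at h
  refine (hA.mulVec_eq_smul_iff _ x).2 fun k => ?_
  rcases mul_eq_zero.1 (h k (Finset.mem_univ k)) with h | h
  · rw [h, zero_mul]
  · rw [pow_eq_zero_iff two_ne_zero] at h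
    rw [h, mul_zero]

theorem PosSemidef.sortedEigs_zero_eq_zero (hA : A.PosSemidef) (hm : 0 < m) {v₀ : Fin m → ℝ}
    (hv₀ : v₀ ≠ 0) (hAv₀ : A *ᵥ v₀ = 0) : sortedEigs A ⟨0, hm⟩ = 0 := by
  have hH := hA.isHermitian
  obtain ⟨j, hj⟩ : ∃ j, hH.eigenCoords v₀ j ≠ 0 := by
    by_contra! h
    exact hv₀ (hH.eigenCoords_injective (by rw [hH.eigenCoords_zero]; exact funext h))
  have hμj : hH.eigenvalues j = 0 := by
    have := (hH.mulVec_eq_smul_iff 0 v₀).1 (by rw [hAv₀, zero_smul]) j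
    rwa [sub_zero, mul_eq_zero, or_iff_left hj] at this
  refine le_antisymm ?_ ?_
  · rw [← hμj, hH.eigenvalues_eq_sortedEigs]
    exact hH.sortedEigs_monotone (Fin.le_def.2 (Nat.zero_le _))
  · rw [sortedEigs, dif_pos hH]
    exact hA.eigenvalues_nonneg _

end SortedEigs

end Matrix

lemma mip_transpose_mul_self {m : ℕ} (U M : Matrix (Fin m) (Fin m) ℝ) :
    mip (Uᵀ * U) M = ∑ k, U k ⬝ᵥ (M *ᵥ U k) := by
  rw [mip, transpose_mul, transpose_transpose, Matrix.mul_assoc, trace_mul_comm, trace]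
  refine Finset.sum_congr rfl fun k _ => ?_
  rw [diag_apply, mul_apply_eq_vecMul, mul_apply_eq_vecMul, vecMul_transpose, dotProduct_mulVec,
    dotProduct_comm]
  rfl

section Multiplex

variable {N : ℕ} {L1 L2 : Matrix (Fin N) (Fin N) ℝ} {w : Fin N → ℝ}

lemma zvec_castAdd (i : Fin N) : zvec N (Fin.castAdd N i) = 1 :=
  if_pos i.isLt

lemma zvec_natAdd (i : Fin N) : zvec N (Fin.natAdd N i) = -1 :=
  if_neg (by simp)

theorem supraLap_posSemidef (hL1 : L1.PosSemidef) (hL2 : L2.PosSemidef) (hw : ∀ i, 0 ≤ w i) :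
    (supraLap L1 L2 w).PosSemidef := by
  rw [supraLap, reindex_apply]
  refine PosSemidef.submatrix (.of_dotProduct_mulVec_nonneg ?_ fun x => ?_) _
  · have hD := isHermitian_diagonal w
    exact isHermitian_fromBlocks_iff.2 ⟨hL1.1.add hD, hD.neg, hD.neg, hL2.1.add hD⟩
  obtain ⟨x₁, x₂, rfl⟩ : ∃ x₁ x₂, x = Sum.elim x₁ x₂ := ⟨_, _, (Sum.elim_comp_inl_inr x).symm⟩
  have hW : x₁ ⬝ᵥ (diagonal w *ᵥ x₁) - x₁ ⬝ᵥ (diagonal w *ᵥ x₂) - x₂ ⬝ᵥ (diagonal w *ᵥ x₁)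
      + x₂ ⬝ᵥ (diagonal w *ᵥ x₂) = ∑ i, w i * (x₁ i - x₂ i) ^ 2 := by
    simp only [dotProduct, mulVec_diagonal, ← Finset.sum_sub_distrib, ← Finset.sum_add_distrib]
    exact Finset.sum_congr rfl fun i _ => by ring
  have h₁ : 0 ≤ x₁ ⬝ᵥ (L1 *ᵥ x₁) := by simpa using hL1.dotProduct_mulVec_nonneg x₁
  have h₂ : 0 ≤ x₂ ⬝ᵥ (L2 *ᵥ x₂) := by simpa using hL2.dotProduct_mulVec_nonneg x₂
  have h₃ : 0 ≤ ∑ i, w i * (x₁ i - x₂ i) ^ 2 :=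
    Finset.sum_nonneg fun i _ => mul_nonneg (hw i) (sq_nonneg _)
  simp only [fromBlocks_mulVec, star_trivial, Sum.elim_comp_inl, Sum.elim_comp_inr,
    sumElim_dotProduct_sumElim, add_mulVec, neg_mulVec, dotProduct_add, dotProduct_neg]
  linarith

theorem supraLap_mulVec_one (hL1e : L1 *ᵥ (fun _ => (1 : ℝ)) = 0)
    (hL2e : L2 *ᵥ (fun _ => (1 : ℝ)) = 0) : supraLap L1 L2 w *ᵥ (fun _ => (1 : ℝ)) = 0 := by
  have hone : (fun _ => (1 : ℝ)) ∘ (finSumFinEquiv : Fin N ⊕ Fin N ≃ Fin (N + N)) =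
      Sum.elim (fun _ => 1) (fun _ => 1) :=
    funext fun s => by cases s <;> rfl
  rw [supraLap, reindex_apply, submatrix_mulVec_equiv, Equiv.symm_symm, hone, fromBlocks_mulVec]
  simp only [Sum.elim_comp_inl, Sum.elim_comp_inr, add_mulVec, neg_mulVec, hL1e, hL2e, zero_add,
    add_neg_cancel, neg_add_cancel, Sum.elim_zero_zero, Pi.zero_comp]

end Multiplex

/-- Clumped one-dimensional optimal embedding below the threshold: if `λ₂(L(w))` is simple
with Fiedler vector `z = (e; -e)`, and `X = UᵀU` satisfies the complementary-slackness
conditions, then there is `h ∈ ℝ^n` such that the columns of `U` equal `h` on the first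
layer and `-h` on the second layer. -/
theorem stmt8 (N : ℕ) (hN : 1 ≤ N)
    (L1 L2 : Matrix (Fin N) (Fin N) ℝ)
    (hL1 : L1.PosSemidef) (hL2 : L2.PosSemidef)
    (hL1e : L1 *ᵥ (fun _ => (1 : ℝ)) = 0) (hL2e : L2 *ᵥ (fun _ => (1 : ℝ)) = 0)
    (w : Fin N → ℝ) (hw : ∀ i, 0 ≤ w i)
    (lam : ℝ) (hlam : lam = sortedEigs (supraLap L1 L2 w) ⟨1, by omega⟩)
    (hsimple : ∀ x : Fin (N + N) → ℝ,
      (supraLap L1 L2 w) *ᵥ x = lam • x → ∃ t : ℝ, x = t • zvec N)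
    (U : Matrix (Fin (N + N)) (Fin (N + N)) ℝ)
    (hXe : mip (Uᵀ * U) (Matrix.vecMulVec (fun _ => (1 : ℝ)) (fun _ => (1 : ℝ))) = 0)
    (hXs : mip (Uᵀ * U)
      (supraLap L1 L2 w - lam • (1 : Matrix (Fin (N + N)) (Fin (N + N)) ℝ)) = 0) :
    ∃ h : Fin (N + N) → ℝ, ∀ i : Fin N,
      (fun k => U k (Fin.castAdd N i)) = h ∧ (fun k => U k (Fin.natAdd N i)) = -h := by
  subst hlam
  have hm : 1 < N + N := by omega
  have hA := supraLap_posSemidef hL1 hL2 hw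
  have he : (fun _ => (1 : ℝ)) ≠ (0 : Fin (N + N) → ℝ) :=
    Function.ne_iff.2 ⟨⟨0, by omega⟩, one_ne_zero⟩
  have hAe : supraLap L1 L2 w *ᵥ (fun _ => 1) =
      sortedEigs (supraLap L1 L2 w) ⟨0, by omega⟩ • fun _ => 1 := by
    rw [hA.sortedEigs_zero_eq_zero (by omega) he (supraLap_mulVec_one hL1e hL2e), zero_smul,
      supraLap_mulVec_one hL1e hL2e]
  have horth : ∀ k, (fun _ => (1 : ℝ)) ⬝ᵥ U k = 0 := by
    simp only [mip_transpose_mul_self, dotProduct_vecMulVec_self_mulVec,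
      Finset.sum_eq_zero_iff_of_nonneg fun _ _ => sq_nonneg _] at hXe
    exact fun k => pow_eq_zero_iff two_ne_zero |>.1 (hXe k (Finset.mem_univ k))
  rw [mip_transpose_mul_self, Finset.sum_eq_zero_iff_of_nonneg fun k _ =>
    hA.isHermitian.dotProduct_sub_sortedEigs_one_smul_mulVec_nonneg hm he hAe (horth k)] at hXs
  choose t ht using fun k => hsimple (U k) (hA.isHermitian.mulVec_eq_sortedEigs_one_smul hm he hAe
    (horth k) (hXs k (Finset.mem_univ k)))
  refine ⟨t, fun i => ⟨funext fun k => ?_, funext fun k => ?_⟩⟩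
  · rw [ht k, Pi.smul_apply, zvec_castAdd, smul_eq_mul, mul_one]
  · rw [ht k, Pi.smul_apply, zvec_natAdd, smul_eq_mul, mul_neg_one, Pi.neg_apply]
end

section
/- One-dimensional optimal λn-embedding below the threshold (Proposition: Emb_n_Small): let w ∈ ℝ^N with w_i ≥ 0 for all i, let λₙ := λmax(L(w)), and assume the eigenspace of L(w) for the eigenvalue λₙ is one-dimensional and spanned by the vector (φ; 0) ∈ ℝ^n, where φ ∈ ℝ^N (φ padded with N zeros). Let V be an n×n real matrix and Y := VᵀV with ⟨Y, λₙ·I − L(w)⟩ = 0. Then there exists h ∈ ℝ^n such that the i-th column v_i of V satisfies v_i = φ_i·h for every 1 ≤ i ≤ N and v_i = 0 for every N+1 ≤ i ≤ n; i.e., the optimal embedding is one-dimensional, with the nodes of the first layer distributed along a line according to φ and the nodes of the second layer placed at the origin. -/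
open Matrix

/-!
Since `λₙ` is the largest eigenvalue, `M := λₙ·I - L(w)` is positive semidefinite. Writing
`M = SᴴS`, the hypothesis says `⟨VᵀV, M⟩ = ‖V Sᴴ‖²_F = 0`, hence `V M = 0`: every row of `V`
is an eigenvector of `L(w)` for `λₙ`, so by simplicity the `k`-th row is `h_k · (φ; 0)`.
Reading this column by column gives the claim.
-/

open scoped MatrixOrder ComplexOrder

section

variable {𝕜 : Type*} [RCLike 𝕜] {m n : Type*} [Fintype n] [DecidableEq n]

theorem Matrix.PosSemidef.mul_eq_zero_of_trace_eq_zero [Fintype m] {M : Matrix n n 𝕜}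
    (hM : M.PosSemidef) {V : Matrix m n 𝕜} (h : (Vᴴ * V * M).trace = 0) : V * M = 0 := by
  obtain ⟨S, rfl⟩ := CStarAlgebra.nonneg_iff_eq_star_mul_self.mp hM.nonneg
  rw [star_eq_conjTranspose] at h ⊢
  rw [mul_conjTranspose_mul_self_eq_zero, ← trace_mul_conjTranspose_self_eq_zero_iff, ← h,
    conjTranspose_mul, conjTranspose_conjTranspose, ← Matrix.mul_assoc, trace_mul_comm]
  simp only [Matrix.mul_assoc]

theorem Matrix.IsHermitian.posSemidef_smul_one_sub {A : Matrix n n 𝕜} (hA : A.IsHermitian)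
    {r : ℝ} (h : ∀ i, hA.eigenvalues i ≤ r) : (r • 1 - A).PosSemidef := by
  rw [← nonneg_iff_posSemidef]
  have hcfc : 0 ≤ cfc (fun x => r - x) A := cfc_nonneg fun x hx => by
    obtain ⟨i, rfl⟩ := hA.spectrum_real_eq_range_eigenvalues ▸ hx
    exact sub_nonneg.mpr (h i)
  rwa [cfc_sub _ _, cfc_const r A, cfc_id' ℝ A, Algebra.algebraMap_eq_smul_one] at hcfc

theorem Matrix.IsSymm.mulVec_eq_smul_of_mul_smul_one_sub_eq_zero {R : Type*} [CommRing R]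
    {A : Matrix n n R} (hA : A.IsSymm) {V : Matrix m n R} {r : R} (h : V * (r • 1 - A) = 0)
    (k : m) : A *ᵥ V k = r • V k := by
  have hk : V k ᵥ* (r • 1 - A) = 0 := by
    ext j
    rw [← mul_apply_eq_vecMul, h, zero_apply, Pi.zero_apply]
  rw [vecMul_sub, vecMul_smul, vecMul_one, ← hA.eq, vecMul_transpose, sub_eq_zero] at hk
  exact hk.symm

end

theorem Matrix.IsHermitian.eigenvalues_le_sortedEigs {m : ℕ} {A : Matrix (Fin m) (Fin m) ℝ}
    (hA : A.IsHermitian) {k : Fin m} (hk : (k : ℕ) = m - 1) (i : Fin m) :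
    hA.eigenvalues i ≤ sortedEigs A k := by
  rw [sortedEigs, dif_pos hA]
  have hi : (Tuple.sort hA.eigenvalues)⁻¹ i ≤ k := by
    rw [Fin.le_def, hk]
    omega
  simpa using Tuple.monotone_sort hA.eigenvalues hi

theorem supraLap_isHermitian {N : ℕ} {L1 L2 : Matrix (Fin N) (Fin N) ℝ} (h1 : L1.IsHermitian)
    (h2 : L2.IsHermitian) (w : Fin N → ℝ) : (supraLap L1 L2 w).IsHermitian :=
  (IsHermitian.fromBlocks (h1.add (isHermitian_diagonal w)) (by simp)
    (h2.add (isHermitian_diagonal w))).submatrix _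

/-- One-dimensional optimal `λₙ`-embedding below the threshold: if the eigenspace of
`L(w)` for `λₙ` is one-dimensional and spanned by `(φ; 0)`, and `Y = VᵀV` satisfies
`⟨Y, λₙ·I - L(w)⟩ = 0`, then there is `h ∈ ℝ^n` such that the columns of `V` are `φᵢ·h` on
the first layer and `0` on the second layer. -/
theorem stmt17 (N : ℕ) (hN : 1 ≤ N)
    (L1 L2 : Matrix (Fin N) (Fin N) ℝ)
    (hL1 : L1.PosSemidef) (hL2 : L2.PosSemidef)
    (w : Fin N → ℝ)
    (lam : ℝ) (hlam : lam = sortedEigs (supraLap L1 L2 w) ⟨N + N - 1, by omega⟩)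
    (φ : Fin N → ℝ)
    (hsimple : ∀ x : Fin (N + N) → ℝ, (supraLap L1 L2 w) *ᵥ x = lam • x →
      ∃ t : ℝ, x = t • (fun k => Sum.elim φ (fun _ => (0 : ℝ)) (finSumFinEquiv.symm k)))
    (V : Matrix (Fin (N + N)) (Fin (N + N)) ℝ)
    (hYs : mip (Vᵀ * V)
      (lam • (1 : Matrix (Fin (N + N)) (Fin (N + N)) ℝ) - supraLap L1 L2 w) = 0) :
    ∃ h : Fin (N + N) → ℝ, ∀ i : Fin N,
      (fun k => V k (Fin.castAdd N i)) = φ i • h ∧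
      (fun k => V k (Fin.natAdd N i)) = 0 := by
  have hH := supraLap_isHermitian hL1.isHermitian hL2.isHermitian w
  have hM : (lam • 1 - supraLap L1 L2 w).PosSemidef :=
    hH.posSemidef_smul_one_sub fun i => hlam ▸ hH.eigenvalues_le_sortedEigs rfl i
  have hVM : V * (lam • 1 - supraLap L1 L2 w) = 0 :=
    hM.mul_eq_zero_of_trace_eq_zero <| by
      simpa [mip, conjTranspose_eq_transpose_of_trivial] using hYs
  choose t ht using fun k =>
    hsimple _ ((isHermitian_iff_isSymm.mp hH).mulVec_eq_smul_of_mul_smul_one_sub_eq_zero hVM k)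
  refine ⟨t, fun i => ⟨funext fun k => ?_, funext fun k => ?_⟩⟩
  · simpa [mul_comm] using congrFun (ht k) (Fin.castAdd N i)
  · simpa only [Pi.smul_apply, finSumFinEquiv_symm_apply_natAdd, Sum.elim_inr, smul_zero,
      Pi.zero_apply]
      using congrFun (ht k) (Fin.natAdd N i)
end
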